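/- arXiv:2604.27040 — 2 statements merged into one kernel-verified Lean document; each statement's English description precedes it below -/
import Mathlib

section
/- Let d_R, d_B, ℓ ≥ 1, let p : Fin ℓ → ℝ be a probability vector, and for each i ∈ Fin ℓ let ρ^i be a density matrix on ℂ^{d_R} ⊗ ℂ^{d_B}. Define the flagged density matrix ρ on ℂ^{d_R} ⊗ (ℂ^ℓ ⊗ ℂ^{d_B}) by ρ ((r, (z, b)), (r', (z', b'))) := if z = z' then p z · ρ^z ((r, b), (r', b')) else 0. Then the maximal singlet fraction with optimization over the composite second system Z ⊗ B satisfies F(ρ) = ∑_{i} p i · F(ρ^i), where F(ρ) := sSup { Re (Tr (ρ · Y)) : Y positive semidefinite on ℂ^{d_R} ⊗ (ℂ^ℓ ⊗ ℂ^{d_B}), Tr_R Y = (1/d_R) · 1_{ℓ d_B} } and F(ρ^i) := sSup { Re (Tr (ρ^i · Y)) : Y positive semidefinite on ℂ^{d_R} ⊗ ℂ^{d_B}, Tr_R Y = (1/d_R) · 1_{d_B} }. -/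
open scoped BigOperators
open scoped ComplexOrder
open Matrix

/-- The partial trace over the first (`R`) factor. -/
noncomputable def ptrA {A B : Type*} [Fintype A]
    (Y : Matrix (A × B) (A × B) ℂ) : Matrix B B ℂ :=
  Matrix.of fun b b' => ∑ a, Y (a, b) (a, b')

/-- The maximal singlet fraction of a bipartite (density) matrix `ρ`, with the first factor
playing the role of the reference system `R`. -/
noncomputable def msf {A B : Type*} [Fintype A] [Fintype B] [DecidableEq A] [DecidableEq B]
    (ρ : Matrix (A × B) (A × B) ℂ) : ℝ :=
  sSup { x : ℝ | ∃ Y : Matrix (A × B) (A × B) ℂ, Y.PosSemidef ∧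
    ptrA Y = ((Fintype.card A : ℂ))⁻¹ • (1 : Matrix B B ℂ) ∧
    x = ((ρ * Y).trace).re }

lemma entry_abs_le_trace {n : Type*} [Fintype n] {Y : Matrix n n ℂ} (hY : Y.PosSemidef)
    (s q : n) : ‖Y s q‖ ≤ Y.trace.re := by
  obtain ⟨B, rfl⟩ : ∃ B : Matrix n n ℂ, Y = Bᴴ * B := by
    classical
    open scoped MatrixOrder Matrix.Norms.L2Operator in
    obtain ⟨B, hB⟩ := CStarAlgebra.nonneg_iff_eq_star_mul_self.mp hY.nonneg
    exact ⟨B, hB⟩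
  have htr : (Bᴴ * B).trace.re = ∑ j, ∑ k, Complex.normSq (B k j) := by
    simp only [Matrix.trace, Matrix.diag_apply, Matrix.mul_apply, Matrix.conjTranspose_apply,
      Complex.re_sum]
    refine Finset.sum_congr rfl fun j _ => Finset.sum_congr rfl fun k _ => ?_
    simp [Complex.mul_re, Complex.normSq_apply]
  have hcol : ∀ j : n, ∑ k, Complex.normSq (B k j) ≤ (Bᴴ * B).trace.re := by
    intro j
    rw [htr]
    exact Finset.single_le_sum (f := fun j => ∑ k, Complex.normSq (B k j))
      (fun i _ => Finset.sum_nonneg fun k _ => Complex.normSq_nonneg _) (Finset.mem_univ j)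
  have h1 : ‖(Bᴴ * B) s q‖ ≤ ∑ k, ‖B k s‖ * ‖B k q‖ := by
    rw [Matrix.mul_apply]
    refine (norm_sum_le _ _).trans (Finset.sum_le_sum fun k _ => ?_)
    simp [norm_mul, Matrix.conjTranspose_apply]
  have h2 : ∑ k, ‖B k s‖ * ‖B k q‖
      ≤ ∑ k, (Complex.normSq (B k s) + Complex.normSq (B k q)) / 2 := by
    refine Finset.sum_le_sum fun k _ => ?_
    rw [← Complex.sq_norm, ← Complex.sq_norm]
    nlinarith [sq_nonneg (‖B k s‖ - ‖B k q‖)]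
  refine h1.trans (h2.trans ?_)
  rw [← Finset.sum_div, Finset.sum_add_distrib]
  linarith [hcol s, hcol q]

lemma posSemidef_blockDiagonal {ι m : Type*} [Fintype ι] [Fintype m] [DecidableEq ι]
    {M : ι → Matrix m m ℂ} (hM : ∀ k, (M k).PosSemidef) :
    (Matrix.blockDiagonal M).PosSemidef := by
  rw [Matrix.posSemidef_iff_dotProduct_mulVec]
  constructor
  · rw [Matrix.IsHermitian, Matrix.blockDiagonal_conjTranspose]
    exact congrArg _ (funext fun k => (hM k).1)
  · intro x
    have h : star x ⬝ᵥ (Matrix.blockDiagonal M) *ᵥ x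
        = ∑ k, star (fun i => x (i, k)) ⬝ᵥ (M k) *ᵥ (fun i => x (i, k)) := by
      simp only [dotProduct, Matrix.mulVec, Pi.star_apply, Fintype.sum_prod_type,
        Matrix.blockDiagonal_apply, ite_mul, zero_mul, mul_ite, mul_zero,
        Finset.sum_ite_eq, Finset.mem_univ, if_true]
      exact Finset.sum_comm
    rw [h]
    exact Finset.sum_nonneg fun k _ => (hM k).dotProduct_mulVec_nonneg _

lemma trace_blockDiagonal_mul {ι m : Type*} [Fintype ι] [Fintype m] [DecidableEq ι]
    (M : ι → Matrix m m ℂ) (N : Matrix (m × ι) (m × ι) ℂ) :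
    (Matrix.blockDiagonal M * N).trace
      = ∑ k, (M k * Matrix.of fun i j => N (i, k) (j, k)).trace := by
  simp only [Matrix.trace, Matrix.diag_apply, Matrix.mul_apply, Matrix.of_apply,
    Fintype.sum_prod_type, Matrix.blockDiagonal_apply, ite_mul, zero_mul,
    Finset.sum_ite_eq, Finset.mem_univ, if_true]
  exact Finset.sum_comm

lemma trace_of_constraint {A B : Type*} [Fintype A] [Fintype B] [DecidableEq B]
    {Y : Matrix (A × B) (A × B) ℂ} {c : ℂ}
    (h : ptrA Y = c • (1 : Matrix B B ℂ)) :
    Y.trace = (Fintype.card B : ℂ) * c := by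
  have h1 : Y.trace = ∑ b, ptrA Y b b := by
    simp only [Matrix.trace, Matrix.diag_apply, Fintype.sum_prod_type, ptrA, Matrix.of_apply]
    exact Finset.sum_comm
  rw [h1, h]
  simp [Matrix.smul_apply, Matrix.one_apply, mul_comm]

lemma smul_one_posSemidef {B : Type*} [Fintype B] [DecidableEq B] {r : ℝ} (hr : 0 ≤ r) :
    ((r : ℂ) • (1 : Matrix B B ℂ)).PosSemidef := by
  have : (r : ℂ) • (1 : Matrix B B ℂ) = Matrix.diagonal (fun _ => (r : ℂ)) := by
    ext i j
    by_cases hij : i = j <;> simp [Matrix.one_apply, Matrix.diagonal, hij]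
  rw [this]
  exact Matrix.PosSemidef.diagonal fun i => by
    simpa using (Complex.zero_le_real).mpr hr

def FS {A B : Type*} [Fintype A] [Fintype B] [DecidableEq A] [DecidableEq B]
    (ρ : Matrix (A × B) (A × B) ℂ) : Set ℝ :=
  { x : ℝ | ∃ Y : Matrix (A × B) (A × B) ℂ, Y.PosSemidef ∧
    ptrA Y = ((Fintype.card A : ℂ))⁻¹ • (1 : Matrix B B ℂ) ∧
    x = ((ρ * Y).trace).re }

lemma msf_eq_sSup_FS {A B : Type*} [Fintype A] [Fintype B] [DecidableEq A] [DecidableEq B]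
    (ρ : Matrix (A × B) (A × B) ℂ) : msf ρ = sSup (FS ρ) := rfl

lemma ptrA_smul_one {A B : Type*} [Fintype A] [Fintype B]
    [DecidableEq A] [DecidableEq B] (r : ℝ) :
    ptrA ((r : ℂ) • (1 : Matrix (A × B) (A × B) ℂ))
      = ((r : ℂ) * (Fintype.card A : ℂ)) • (1 : Matrix B B ℂ) := by
  ext b b'
  by_cases hbb : b = b' <;>
    simp [ptrA, Matrix.one_apply, Prod.ext_iff, hbb, Finset.sum_const, mul_comm]

lemma nonempty_FS {A B : Type*} [Fintype A] [Fintype B] [Nonempty A]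
    [DecidableEq A] [DecidableEq B] (ρ : Matrix (A × B) (A × B) ℂ) : (FS ρ).Nonempty := by
  set r : ℝ := (((Fintype.card A : ℝ)) * (Fintype.card A : ℝ))⁻¹ with hr
  have hr0 : 0 ≤ r := by positivity
  refine ⟨_, (r : ℂ) • (1 : Matrix (A × B) (A × B) ℂ), smul_one_posSemidef hr0, ?_, rfl⟩
  rw [ptrA_smul_one]
  have hA : ((Fintype.card A : ℂ)) ≠ 0 := by
    exact_mod_cast Fintype.card_ne_zero
  congr 1
  rw [hr]
  push_cast
  field_simp

lemma bddAbove_FS {A B : Type*} [Fintype A] [Fintype B]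
    [DecidableEq A] [DecidableEq B] (ρ : Matrix (A × B) (A × B) ℂ) : BddAbove (FS ρ) := by
  classical
  refine ⟨(∑ q, ∑ s, ‖ρ q s‖) * ((Fintype.card B : ℝ) / (Fintype.card A : ℝ)), ?_⟩
  rintro x ⟨Y, hY, hc, rfl⟩
  have htr : Y.trace = (Fintype.card B : ℂ) * ((Fintype.card A : ℂ))⁻¹ := trace_of_constraint hc
  have hK : Y.trace.re = (Fintype.card B : ℝ) / (Fintype.card A : ℝ) := by
    rw [htr]
    push_cast
    rw [div_eq_mul_inv]
    norm_num [Complex.mul_re]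
  have hK0 : 0 ≤ Y.trace.re := by rw [hK]; positivity
  have hentry : ∀ s q, ‖Y s q‖ ≤ Y.trace.re := entry_abs_le_trace hY
  calc ((ρ * Y).trace).re ≤ ‖(ρ * Y).trace‖ := Complex.re_le_norm _
    _ ≤ ∑ q, ‖(ρ * Y) q q‖ := by
        rw [Matrix.trace]; exact norm_sum_le _ _
    _ ≤ ∑ q, ∑ s, ‖ρ q s‖ * Y.trace.re := by
        refine Finset.sum_le_sum fun q _ => ?_
        rw [Matrix.mul_apply]
        refine (norm_sum_le _ _).trans (Finset.sum_le_sum fun s _ => ?_)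
        rw [norm_mul]
        exact mul_le_mul_of_nonneg_left (hentry s q) (norm_nonneg _)
    _ = (∑ q, ∑ s, ‖ρ q s‖) * ((Fintype.card B : ℝ) / (Fintype.card A : ℝ)) := by
        rw [← hK, Finset.sum_mul]
        exact Finset.sum_congr rfl fun q _ => (Finset.sum_mul _ _ _).symm

/-- For a flagged density matrix `ρ = ∑ i, p i |i⟩⟨i|_Z ⊗ ρ^i` on `ℂ^{d_R} ⊗ (ℂ^ℓ ⊗ ℂ^{d_B})`,
the maximal singlet fraction with optimization over the composite second system `Z ⊗ B`
decomposes as `F(ρ) = ∑ i, p i · F(ρ^i)`. -/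
theorem msf_flagged (dR dB ℓ : ℕ) (hdR : 1 ≤ dR) (hdB : 1 ≤ dB) (hℓ : 1 ≤ ℓ)
    (p : Fin ℓ → ℝ) (hp0 : ∀ i, 0 ≤ p i) (hp1 : ∑ i, p i = 1)
    (ρi : Fin ℓ → Matrix (Fin dR × Fin dB) (Fin dR × Fin dB) ℂ)
    (hρiPSD : ∀ i, (ρi i).PosSemidef) (hρitr : ∀ i, (ρi i).trace = 1) :
    msf (Matrix.of fun q r : Fin dR × (Fin ℓ × Fin dB) =>
        if q.2.1 = r.2.1 then (p q.2.1 : ℂ) * ρi q.2.1 (q.1, q.2.2) (r.1, r.2.2) else 0) =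
      ∑ i, p i * msf (ρi i) := by
  classical
  have : Nonempty (Fin dR) := ⟨⟨0, hdR⟩⟩
  set M : Fin ℓ → Matrix (Fin dR × Fin dB) (Fin dR × Fin dB) ℂ :=
    fun z => (p z : ℂ) • ρi z with hM
  set E : (Fin dR × (Fin ℓ × Fin dB)) ≃ ((Fin dR × Fin dB) × Fin ℓ) :=
    ⟨fun q => ((q.1, q.2.2), q.2.1), fun s => (s.1.1, (s.2, s.1.2)),
      fun q => rfl, fun s => rfl⟩ with hE
  set ρ : Matrix (Fin dR × (Fin ℓ × Fin dB)) (Fin dR × (Fin ℓ × Fin dB)) ℂ :=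
    Matrix.of (fun q r : Fin dR × (Fin ℓ × Fin dB) =>
      if q.2.1 = r.2.1 then (p q.2.1 : ℂ) * ρi q.2.1 (q.1, q.2.2) (r.1, r.2.2) else 0) with hρdef
  have hρform : ρ = (Matrix.blockDiagonal M).submatrix ⇑E ⇑E := by
    ext q r
    simp [hρdef, hM, hE, Matrix.blockDiagonal_apply, Matrix.submatrix_apply]
  have trsub : ∀ (X : Matrix ((Fin dR × Fin dB) × Fin ℓ) ((Fin dR × Fin dB) × Fin ℓ) ℂ),
      (X.submatrix ⇑E ⇑E).trace = X.trace := by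
    intro X
    simp only [Matrix.trace, Matrix.diag_apply, Matrix.submatrix_apply]
    exact Equiv.sum_comp E fun s => X s s
  have hne : ∀ i, (FS (ρi i)).Nonempty := fun i => nonempty_FS _
  have hbdd : ∀ i, BddAbove (FS (ρi i)) := fun i => bddAbove_FS _
  -- Claim A: decompose any feasible value
  have claimA : ∀ x ∈ FS ρ, ∃ xi : Fin ℓ → ℝ,
      (∀ i, xi i ∈ FS (ρi i)) ∧ x = ∑ i, p i * xi i := by
    rintro x ⟨Y, hY, hc, rfl⟩
    set Yz : Fin ℓ → Matrix (Fin dR × Fin dB) (Fin dR × Fin dB) ℂ :=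
      fun z => Y.submatrix (fun q => (q.1, (z, q.2))) (fun q => (q.1, (z, q.2))) with hYz
    have hofYz : ∀ z, (Matrix.of fun i j =>
        (Y.submatrix ⇑E.symm ⇑E.symm) (i, z) (j, z)) = Yz z := fun z => rfl
    refine ⟨fun z => ((ρi z * Yz z).trace).re, fun z => ⟨Yz z, hY.submatrix _, ?_, rfl⟩, ?_⟩
    · ext b b'
      have h2 : ptrA Y (z, b) (z, b')
          = (((Fintype.card (Fin dR) : ℂ))⁻¹ • (1 : Matrix (Fin ℓ × Fin dB) (Fin ℓ × Fin dB) ℂ))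
            (z, b) (z, b') := by rw [hc]
      simp only [ptrA, Matrix.of_apply, Matrix.smul_apply, Matrix.one_apply, Prod.ext_iff,
        smul_eq_mul] at h2 ⊢
      simpa [hYz] using h2
    · have hY' : Y = ((Y.submatrix ⇑E.symm ⇑E.symm)).submatrix ⇑E ⇑E := by
        rw [Matrix.submatrix_submatrix, Equiv.symm_comp_self, Matrix.submatrix_id_id]
      have hmul : ρ * Y
          = ((Matrix.blockDiagonal M) * (Y.submatrix ⇑E.symm ⇑E.symm)).submatrix ⇑E ⇑E := by
        conv_lhs => rw [hρform, hY']
        rw [Matrix.submatrix_mul_equiv]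
      rw [hmul, trsub, trace_blockDiagonal_mul]
      rw [Complex.re_sum]
      refine Finset.sum_congr rfl fun z _ => ?_
      rw [hofYz z, hM, smul_mul_assoc, Matrix.trace_smul]
      simp [Complex.mul_re]
  -- Claim B: combine feasible points
  have claimB : ∀ xi : Fin ℓ → ℝ, (∀ i, xi i ∈ FS (ρi i)) → (∑ i, p i * xi i) ∈ FS ρ := by
    intro xi hxi
    choose Yis hPSD hcon hxival using hxi
    refine ⟨(Matrix.blockDiagonal Yis).submatrix ⇑E ⇑E,
      (posSemidef_blockDiagonal hPSD).submatrix _, ?_, ?_⟩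
    · ext t t'
      obtain ⟨z, b⟩ := t
      obtain ⟨z', b'⟩ := t'
      simp only [ptrA, Matrix.of_apply, Matrix.submatrix_apply, Matrix.smul_apply,
        Matrix.one_apply, Prod.ext_iff, smul_eq_mul, hE, Equiv.coe_fn_mk,
        Matrix.blockDiagonal_apply]
      by_cases hzz : z = z'
      · subst hzz
        have h2 : ptrA (Yis z) b b'
            = (((Fintype.card (Fin dR) : ℂ))⁻¹ • (1 : Matrix (Fin dB) (Fin dB) ℂ)) b b' := by
          rw [hcon z]
        simp only [ptrA, Matrix.of_apply, Matrix.smul_apply, Matrix.one_apply,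
          smul_eq_mul] at h2
        simpa using h2
      · simp [hzz]
    · have hmul : ρ * (Matrix.blockDiagonal Yis).submatrix ⇑E ⇑E
          = ((Matrix.blockDiagonal M) * (Matrix.blockDiagonal Yis)).submatrix ⇑E ⇑E := by
        rw [hρform, Matrix.submatrix_mul_equiv]
      rw [hmul, trsub, ← Matrix.blockDiagonal_mul, Matrix.trace_blockDiagonal, Complex.re_sum]
      refine Finset.sum_congr rfl fun z _ => ?_
      rw [hxival z]
      simp only [hM, smul_mul_assoc, Matrix.trace_smul, smul_eq_mul]
      simp [Complex.mul_re]
  -- assemble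
  have hFSne : (FS ρ).Nonempty := by
    choose y hy using hne
    exact ⟨_, claimB y hy⟩
  have hub : ∀ x ∈ FS ρ, x ≤ ∑ i, p i * msf (ρi i) := by
    rintro x hx
    obtain ⟨xi, hxi, rfl⟩ := claimA x hx
    exact Finset.sum_le_sum fun i _ =>
      mul_le_mul_of_nonneg_left (le_csSup (hbdd i) (hxi i)) (hp0 i)
  have hbddS : BddAbove (FS ρ) := ⟨_, fun x hx => hub x hx⟩
  refine le_antisymm (csSup_le hFSne hub) ?_
  refine le_of_forall_pos_le_add fun ε hε => ?_
  have hlt : ∀ i, ∃ y ∈ FS (ρi i), sSup (FS (ρi i)) - ε < y := fun i =>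
    exists_lt_of_lt_csSup (hne i) (sub_lt_self _ hε)
  choose y hymem hylt using hlt
  have h1 : ∑ i, p i * msf (ρi i) ≤ ∑ i, p i * (y i + ε) :=
    Finset.sum_le_sum fun i _ =>
      mul_le_mul_of_nonneg_left (by have h := hylt i; have hm : msf (ρi i) = sSup (FS (ρi i)) := rfl; rw [hm]; linarith) (hp0 i)
  have h2 : ∑ i, p i * (y i + ε) = (∑ i, p i * y i) + ε := by
    simp only [mul_add, Finset.sum_add_distrib, ← Finset.sum_mul, hp1, one_mul]
  have h3 : (∑ i, p i * y i) ≤ msf ρ := le_csSup hbddS (claimB y hymem)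
  calc ∑ i, p i * msf (ρi i) ≤ (∑ i, p i * y i) + ε := by rw [← h2]; exact h1
    _ ≤ msf ρ + ε := add_le_add_left h3 ε
end

section
/- For a, b ∈ Fin d with a ≠ b, define the transition operator T_{a→b} as the 0-1 matrix indexed by pairs of multi-indices with (T_{a→b}) (i, j) = 1 iff there exists exactly one k ∈ Fin n with i k = a and j k = b and i l = j l for all l ≠ k. Then for every count matrix E of total sum n: C_E · T_{a→b} = ∑_{c : E (c,a) > 0} (E (c,b) + 1) · C_{E − 1_{(c,a)} + 1_{(c,b)}}, and T_{a→b} · C_E = ∑_{c : E (b,c) > 0} (E (a,c) + 1) · C_{E − 1_{(b,c)} + 1_{(a,c)}}, where 1_{(x,y)} denotes the count-matrix unit that is 1 at position (x, y) and 0 elsewhere. -/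
open scoped BigOperators
open Matrix

/-- The count matrix of a pair of multi-indices `(i, j)`:
`E (a, b) = |{k : i k = a ∧ j k = b}|`. -/
def cmat {n : ℕ} {σ : Type*} [DecidableEq σ] (i j : Fin n → σ) : σ × σ → ℕ :=
  fun ab => (Finset.univ.filter fun k => i k = ab.1 ∧ j k = ab.2).card

/-- The orbit matrix `C_E`. -/
def orbMat (n : ℕ) (σ : Type*) [Fintype σ] [DecidableEq σ] (E : σ × σ → ℕ) :
    Matrix (Fin n → σ) (Fin n → σ) ℂ :=
  Matrix.of fun i j => if cmat i j = E then 1 else 0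

open Classical in
/-- The transition operator `T_{a→b}`: the 0-1 matrix with `(T_{a→b}) (i, j) = 1` iff there
exists exactly one `k` with `i k = a`, `j k = b` and `i l = j l` for all `l ≠ k`. -/
noncomputable def transMat (n d : ℕ) (a b : Fin d) :
    Matrix (Fin n → Fin d) (Fin n → Fin d) ℂ :=
  Matrix.of fun i j =>
    if ∃! k : Fin n, i k = a ∧ j k = b ∧ ∀ l : Fin n, l ≠ k → i l = j l then 1 else 0

lemma transMat_cond {n d : ℕ} (a b : Fin d) (hab : a ≠ b) (p j : Fin n → Fin d) :
    (∃! k : Fin n, p k = a ∧ j k = b ∧ ∀ l : Fin n, l ≠ k → p l = j l) ↔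
      ∃ k : Fin n, j k = b ∧ p = Function.update j k a := by
  constructor
  · rintro ⟨k, ⟨hpk, hjk, hoff⟩, -⟩
    refine ⟨k, hjk, ?_⟩
    funext l
    by_cases hl : l = k
    · subst hl; simp [hpk]
    · simp [Function.update_of_ne hl, hoff l hl]
  · rintro ⟨k, hjk, rfl⟩
    refine ⟨k, ⟨by simp, hjk, fun l hl => Function.update_of_ne hl _ _⟩, ?_⟩
    rintro k' ⟨hpk', hjk', -⟩
    by_contra hkk'
    rw [Function.update_of_ne hkk'] at hpk'
    exact hab (hpk'.symm.trans hjk')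

lemma card_filter_split {n : ℕ} (k : Fin n) (Q : Fin n → Prop) [DecidablePred Q] :
    (Finset.univ.filter Q).card
      = ((Finset.univ.erase k).filter Q).card + (if Q k then 1 else 0) := by
  have h : (Finset.univ : Finset (Fin n)) = insert k (Finset.univ.erase k) := by
    rw [Finset.insert_erase (Finset.mem_univ k)]
  conv_lhs => rw [h, Finset.filter_insert]
  split
  · rw [Finset.card_insert_of_notMem (by simp)]
  · simp

lemma cmat_update {n d : ℕ} (a b : Fin d) (hab : a ≠ b) (i j : Fin n → Fin d)
    (k : Fin n) (hjk : j k = b) :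
    cmat i (Function.update j k a) = fun xy =>
      if xy = (i k, b) then cmat i j xy - 1
      else if xy = (i k, a) then cmat i j xy + 1 else cmat i j xy := by
  classical
  funext xy
  have hfe : (Finset.univ.erase k).filter
        (fun k' => i k' = xy.1 ∧ Function.update j k a k' = xy.2)
      = (Finset.univ.erase k).filter (fun k' => i k' = xy.1 ∧ j k' = xy.2) := by
    apply Finset.filter_congr
    intro k' hk'
    rw [Function.update_of_ne (Finset.ne_of_mem_erase hk')]
  have h1 : cmat i (Function.update j k a) xy
      = ((Finset.univ.erase k).filter (fun k' => i k' = xy.1 ∧ j k' = xy.2)).card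
        + (if xy = (i k, a) then 1 else 0) := by
    rw [cmat, card_filter_split k, hfe]
    congr 1
    simp only [Function.update_self]
    by_cases h : xy = (i k, a)
    · subst h; simp
    · rw [if_neg h, if_neg]
      rintro ⟨h1, h2⟩
      exact h (by rw [Prod.ext_iff]; exact ⟨h1.symm, h2.symm⟩)
  have h2 : cmat i j xy
      = ((Finset.univ.erase k).filter (fun k' => i k' = xy.1 ∧ j k' = xy.2)).card
        + (if xy = (i k, b) then 1 else 0) := by
    rw [cmat, card_filter_split k]
    congr 1
    by_cases h : xy = (i k, b)
    · subst h; simp [hjk]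
    · rw [if_neg h, if_neg]
      rintro ⟨ha, hb⟩
      exact h (by rw [Prod.ext_iff]; exact ⟨ha.symm, (hjk ▸ hb).symm⟩)
  rw [h1, h2]
  by_cases hb' : xy = (i k, b)
  · have hna : xy ≠ (i k, a) := by
      subst hb'
      intro hcon
      rw [Prod.ext_iff] at hcon
      exact hab hcon.2.symm
    simp only [hb', hna, if_pos rfl, if_neg hna]
    simp [Ne.symm hab]
  · by_cases ha' : xy = (i k, a)
    · simp [hb', ha', hab]
    · simp [hb', ha']

lemma key_iff {n d : ℕ} (a b : Fin d) (hab : a ≠ b) (E : Fin d × Fin d → ℕ)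
    (i j : Fin n → Fin d) (k : Fin n) (hjk : j k = b) :
    cmat i (Function.update j k a) = E ↔
      (0 < E (i k, a) ∧ cmat i j = (fun xy =>
        if xy = (i k, a) then E xy - 1 else if xy = (i k, b) then E xy + 1 else E xy)) := by
  classical
  have hne : ((i k, a) : Fin d × Fin d) ≠ (i k, b) := by
    simp [Prod.ext_iff, hab]
  have hF : 1 ≤ cmat i j (i k, b) := by
    rw [cmat]
    refine Finset.card_pos.2 ⟨k, ?_⟩
    simp [hjk]
  rw [cmat_update a b hab i j k hjk]
  constructor
  · intro h
    have hval : ∀ xy, E xy = if xy = (i k, b) then cmat i j xy - 1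
        else if xy = (i k, a) then cmat i j xy + 1 else cmat i j xy := fun xy => by
      rw [← h]
    constructor
    · rw [hval (i k, a), if_neg hne, if_pos rfl]; omega
    · funext xy
      by_cases h1 : xy = (i k, a)
      · rw [if_pos h1, hval xy, h1, if_neg hne, if_pos rfl]
        omega
      · by_cases h2 : xy = (i k, b)
        · rw [if_neg h1, if_pos h2, hval xy, h2, if_pos rfl]
          have := hF; omega
        · rw [if_neg h1, if_neg h2, hval xy, if_neg h2, if_neg h1]
  · rintro ⟨hpos, hF'⟩
    have hval : ∀ xy, cmat i j xy = if xy = (i k, a) then E xy - 1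
        else if xy = (i k, b) then E xy + 1 else E xy := fun xy => by rw [hF']
    funext xy
    by_cases h2 : xy = (i k, b)
    · rw [if_pos h2, hval xy, h2, if_neg (Ne.symm hne), if_pos rfl]
      omega
    · by_cases h1 : xy = (i k, a)
      · rw [if_neg h2, if_pos h1, hval xy, h1, if_pos rfl]
        omega
      · rw [if_neg h2, if_neg h1, hval xy, if_neg h1, if_neg h2]

lemma orb_mul_trans (n d : ℕ) (a b : Fin d) (hab : a ≠ b) (E : Fin d × Fin d → ℕ) :
    orbMat n (Fin d) E * transMat n d a b =
      ∑ c ∈ Finset.univ.filter (fun c : Fin d => 0 < E (c, a)),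
        ((E (c, b) + 1 : ℕ) : ℂ) •
          orbMat n (Fin d) (fun xy =>
            if xy = (c, a) then E xy - 1 else if xy = (c, b) then E xy + 1 else E xy) := by
  classical
  ext i j
  rw [Matrix.mul_apply, Matrix.sum_apply]
  -- abbreviations
  set S : Finset (Fin n) := Finset.univ.filter (fun k => j k = b) with hS
  set t : Finset (Fin n → Fin d) := S.image (fun k => Function.update j k a) with hT
  have hmem : ∀ p, (p ∈ t) ↔ ∃ k, j k = b ∧ p = Function.update j k a := by
    intro p
    simp only [hT, Finset.mem_image, hS, Finset.mem_filter, Finset.mem_univ, true_and]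
    constructor
    · rintro ⟨k, hk, rfl⟩; exact ⟨k, hk, rfl⟩
    · rintro ⟨k, hk, rfl⟩; exact ⟨k, hk, rfl⟩
  have ht : ∀ p, transMat n d a b p j = if p ∈ t then 1 else 0 := by
    intro p
    rw [transMat, Matrix.of_apply]
    exact if_congr ((transMat_cond a b hab p j).trans (hmem p).symm) rfl rfl
  have hinj : ∀ x ∈ S, ∀ y ∈ S, Function.update j x a = Function.update j y a → x = y := by
    intro x hx y hy hxy
    by_contra hne
    have : Function.update j x a x = Function.update j y a x := by rw [hxy]
    rw [Function.update_self, Function.update_of_ne hne] at this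
    rw [hS, Finset.mem_filter] at hx
    exact hab (this.trans hx.2)
  calc
    ∑ p, orbMat n (Fin d) E i p * transMat n d a b p j
        = ∑ p ∈ t, orbMat n (Fin d) E i p := by
          simp_rw [ht, mul_ite, mul_one, mul_zero]
          rw [Finset.sum_ite_mem, Finset.univ_inter]
    _ = ∑ k ∈ S, orbMat n (Fin d) E i (Function.update j k a) := by
          rw [hT, Finset.sum_image hinj]
    _ = ∑ k ∈ S, (if (0 < E (i k, a) ∧ cmat i j = (fun xy =>
            if xy = (i k, a) then E xy - 1 else if xy = (i k, b) then E xy + 1 else E xy))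
          then (1:ℂ) else 0) := by
          refine Finset.sum_congr rfl fun k hk => ?_
          rw [hS, Finset.mem_filter] at hk
          rw [orbMat, Matrix.of_apply]
          exact if_congr (key_iff a b hab E i j k hk.2) rfl rfl
    _ = ∑ c : Fin d, ∑ k ∈ S.filter (fun k => i k = c), (if (0 < E (c, a) ∧ cmat i j = (fun xy =>
            if xy = (c, a) then E xy - 1 else if xy = (c, b) then E xy + 1 else E xy))
          then (1:ℂ) else 0) := by
          rw [← Finset.sum_fiberwise S (fun k => i k)]
          refine Finset.sum_congr rfl fun c _ => Finset.sum_congr rfl fun k hk => ?_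
          rw [Finset.mem_filter] at hk
          rw [hk.2]
    _ = ∑ c : Fin d, ((cmat i j (c, b) : ℕ) : ℂ) * (if (0 < E (c, a) ∧ cmat i j = (fun xy =>
            if xy = (c, a) then E xy - 1 else if xy = (c, b) then E xy + 1 else E xy))
          then (1:ℂ) else 0) := by
          refine Finset.sum_congr rfl fun c _ => ?_
          rw [Finset.sum_const, nsmul_eq_mul]
          congr 1
          rw [cmat, hS, Finset.filter_filter]
          norm_cast
          congr 1
          apply Finset.filter_congr
          intro k _
          simp [and_comm]
    _ = ∑ c ∈ Finset.univ.filter (fun c : Fin d => 0 < E (c, a)),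
          (((E (c, b) + 1 : ℕ) : ℂ) •
            orbMat n (Fin d) (fun xy =>
              if xy = (c, a) then E xy - 1 else if xy = (c, b) then E xy + 1 else E xy)) i j := by
          rw [Finset.sum_filter]
          refine Finset.sum_congr rfl fun c _ => ?_
          rw [Matrix.smul_apply, orbMat, Matrix.of_apply, smul_eq_mul]
          by_cases hpos : 0 < E (c, a)
          · rw [if_pos hpos]
            by_cases hcm : cmat i j = (fun xy =>
                if xy = (c, a) then E xy - 1 else if xy = (c, b) then E xy + 1 else E xy)
            · rw [if_pos ⟨hpos, hcm⟩, if_pos hcm]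
              have hv : cmat i j (c, b) = E (c, b) + 1 := by
                rw [hcm]
                simp [Prod.ext_iff, Ne.symm hab]
              rw [hv]
            · rw [if_neg (fun h => hcm h.2), if_neg hcm, mul_zero, mul_zero]
          · rw [if_neg (fun h : (0 < E (c, a) ∧ _) => hpos h.1), if_neg hpos, mul_zero]

lemma cmat_swap_apply {n d : ℕ} (i j : Fin n → Fin d) (xy : Fin d × Fin d) :
    cmat i j xy = cmat j i xy.swap := by
  rw [cmat, cmat]
  congr 1
  apply Finset.filter_congr
  intro k _
  obtain ⟨x, y⟩ := xy
  simp [and_comm]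

lemma orbMat_transpose {n d : ℕ} (E : Fin d × Fin d → ℕ) :
    (orbMat n (Fin d) E)ᵀ = orbMat n (Fin d) (fun xy => E xy.swap) := by
  ext i j
  rw [Matrix.transpose_apply, orbMat, orbMat, Matrix.of_apply, Matrix.of_apply]
  refine if_congr ⟨fun h => ?_, fun h => ?_⟩ rfl rfl
  · funext xy
    rw [cmat_swap_apply, h]
  · funext xy
    rw [cmat_swap_apply, h]
    simp

lemma transMat_transpose {n d : ℕ} (a b : Fin d) :
    (transMat n d a b)ᵀ = transMat n d b a := by
  classical
  ext i j
  rw [Matrix.transpose_apply, transMat, transMat, Matrix.of_apply, Matrix.of_apply]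
  have hiff : (∃! k : Fin n, j k = a ∧ i k = b ∧ ∀ l : Fin n, l ≠ k → j l = i l) ↔
      (∃! k : Fin n, i k = b ∧ j k = a ∧ ∀ l : Fin n, l ≠ k → i l = j l) := by
    refine existsUnique_congr fun k => ?_
    constructor
    · rintro ⟨h1, h2, h3⟩
      exact ⟨h2, h1, fun l hl => (h3 l hl).symm⟩
    · rintro ⟨h1, h2, h3⟩
      exact ⟨h2, h1, fun l hl => (h3 l hl).symm⟩
  simp only [hiff]

open Classical in
/-- Action of transition operators on orbit matrices:
`C_E · T_{a→b} = ∑_{c : E (c,a) > 0} (E (c,b) + 1) · C_{E − 1_{(c,a)} + 1_{(c,b)}}` and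
`T_{a→b} · C_E = ∑_{c : E (b,c) > 0} (E (a,c) + 1) · C_{E − 1_{(b,c)} + 1_{(a,c)}}`. -/
theorem orbMat_mul_transMat (n d : ℕ) (hd : 1 ≤ d) (a b : Fin d) (hab : a ≠ b)
    (E : Fin d × Fin d → ℕ) (hE : ∑ vw, E vw = n) :
    (orbMat n (Fin d) E * transMat n d a b =
      ∑ c ∈ Finset.univ.filter (fun c : Fin d => 0 < E (c, a)),
        ((E (c, b) + 1 : ℕ) : ℂ) •
          orbMat n (Fin d) (fun xy =>
            if xy = (c, a) then E xy - 1 else if xy = (c, b) then E xy + 1 else E xy)) ∧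
    (transMat n d a b * orbMat n (Fin d) E =
      ∑ c ∈ Finset.univ.filter (fun c : Fin d => 0 < E (b, c)),
        ((E (a, c) + 1 : ℕ) : ℂ) •
          orbMat n (Fin d) (fun xy =>
            if xy = (b, c) then E xy - 1 else if xy = (a, c) then E xy + 1 else E xy)) := by
  constructor
  · exact orb_mul_trans n d a b hab E
  · have h := orb_mul_trans n d b a hab.symm (fun xy => E xy.swap)
    have h2 := congrArg Matrix.transpose h
    rw [Matrix.transpose_mul, transMat_transpose, orbMat_transpose] at h2
    have hswap : (fun xy : Fin d × Fin d => E xy.swap.swap) = E := by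
      funext xy; simp
    rw [hswap] at h2
    rw [h2, Matrix.transpose_sum]
    refine Finset.sum_congr ?_ fun c hc => ?_
    · rfl
    · rw [Matrix.transpose_smul, orbMat_transpose]
      refine congrArg₂ (· • ·) rfl (congrArg _ ?_)
      funext xy
      obtain ⟨x, y⟩ := xy
      simp only [Prod.swap_prod_mk, Prod.mk.injEq]
      by_cases h1 : x = b ∧ y = c
      · rw [if_pos ⟨h1.2, h1.1⟩, if_pos h1]
      · rw [if_neg (fun h => h1 ⟨h.2, h.1⟩), if_neg h1]
        by_cases h2 : x = a ∧ y = c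
        · rw [if_pos ⟨h2.2, h2.1⟩, if_pos h2]
        · rw [if_neg (fun h => h2 ⟨h.2, h.1⟩), if_neg h2]
end
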